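/- arXiv:1909.02691 — 3 statements merged into one kernel-verified Lean document; each statement's English description precedes it below -/
import Mathlib

section
/- Let H be a graph with at least one edge and no isolated vertices, let G be a finite graph, and let K be a k-element subset of the vertex set of G. Let I_K be any size-maximal collection of pairwise edge-disjoint copies of H from H*_K; let T_K be any size-maximal collection of pairwise edge-disjoint copies of H from H_K \ H*_K; and let P_K be any size-maximal collection of pairwise edge-disjoint unions H_1 ∪ H_2 of distinct copies H_1, H_2 ∈ H*_K satisfying |E(H_1) ∩ E(H_2)| ≥ 1 and V(H_1) ∩ K ≠ V(H_2) ∩ K. Then Y_K ≤ |I_K| + 2·e_H²·(|T_K| + |P_K|)·Δ_H. -/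
open Finset Filter
open scoped Classical

noncomputable section

/-- The potential edges (unordered pairs of distinct vertices) of the complete graph on `Fin n`. -/
def allEdges (n : ℕ) : Finset (Sym2 (Fin n)) :=
  Finset.univ.filter fun e => ¬ e.IsDiag

/-- The probability that the binomial random graph `G_{n,p}` (a uniformly random subset of
`allEdges n`, each potential edge present independently with probability `p`) lies in `A`. -/
def gnpProb (n : ℕ) (p : ℝ) (A : Set (Finset (Sym2 (Fin n)))) : ℝ :=
  ∑ G ∈ (allEdges n).powerset,
    if G ∈ A then p ^ G.card * (1 - p) ^ ((allEdges n).card - G.card) else 0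

/-- `P = (W, S)` is a copy of `H` in the edge set `G`: `W` and `S` are the images of the
vertices and edges of `H` under an injection whose edge-image lies in `G`. -/
def IsCopyPair {h n : ℕ} (H : SimpleGraph (Fin h)) (G : Finset (Sym2 (Fin n)))
    (P : Finset (Fin n) × Finset (Sym2 (Fin n))) : Prop :=
  ∃ φ : Fin h ↪ Fin n,
    P.1 = Finset.univ.image ⇑φ ∧
    (↑P.2 : Set (Sym2 (Fin n))) = Sym2.map ⇑φ '' H.edgeSet ∧
    P.2 ⊆ G

/-- The collection of all copies of `H` in the edge set `G`. -/
def copies {h n : ℕ} (H : SimpleGraph (Fin h)) (G : Finset (Sym2 (Fin n))) :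
    Finset (Finset (Fin n) × Finset (Sym2 (Fin n))) :=
  Finset.univ.filter (IsCopyPair H G)

/-- `X_K`: the number of edges of `G` with both endpoints in `K`. -/
def XK {n : ℕ} (G : Finset (Sym2 (Fin n))) (K : Finset (Fin n)) : ℕ :=
  (G.filter fun e => ∀ v ∈ e, v ∈ K).card

/-- `Y_K`: the number of edges of `G` with both endpoints in `K` that lie in some copy
of `H` in `G`. -/
def YK {h n : ℕ} (H : SimpleGraph (Fin h)) (G : Finset (Sym2 (Fin n)))
    (K : Finset (Fin n)) : ℕ :=
  (G.filter fun e => (∀ v ∈ e, v ∈ K) ∧ ∃ P ∈ copies H G, e ∈ P.2).card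

/-- `𝓗_K`: the copies of `H` in `G` having at least one edge with both endpoints in `K`. -/
def HKcol {h n : ℕ} (H : SimpleGraph (Fin h)) (G : Finset (Sym2 (Fin n)))
    (K : Finset (Fin n)) : Finset (Finset (Fin n) × Finset (Sym2 (Fin n))) :=
  (copies H G).filter fun P => ∃ e ∈ P.2, ∀ v ∈ e, v ∈ K

/-- `𝓗*_K`: the copies in `𝓗_K` sharing exactly two vertices with `K`. -/
def HstarK {h n : ℕ} (H : SimpleGraph (Fin h)) (G : Finset (Sym2 (Fin n)))
    (K : Finset (Fin n)) : Finset (Finset (Fin n) × Finset (Sym2 (Fin n))) :=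
  (HKcol H G K).filter fun P => (P.1 ∩ K).card = 2

/-- `Δ_H`: the maximum over all potential edges `f` of the number of copies of `H` in `G`
containing `f`. -/
def deltaH {h n : ℕ} (H : SimpleGraph (Fin h)) (G : Finset (Sym2 (Fin n))) : ℕ :=
  (allEdges n).sup fun f => ((copies H G).filter fun P => f ∈ P.2).card


/-!
Let `e` be an edge of `G` inside `K` lying in a copy `P` of `H`. If `P ∉ 𝓗*_K`, maximality of
`T_K` makes `P` share an edge with `T_K`: there are at most `e_H |T_K|` such edges, each lying
in at most `Δ_H` copies with `e_H` edges each. If `P ∈ 𝓗*_K`, maximality of `I_K` gives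
`I ∈ I_K` sharing an edge with `P`. When `P` and `I` meet `K` in the same two vertices, `e` is
the unique edge of `I` inside `K`, and these edges number at most `|I_K|`. Otherwise `(P, I)` is
one of the pairs defining `P_K`, so by maximality it shares an edge `f` with `P_K`; then `P`
meets `f` or the copy of `I_K` through `f`. This gives at most `2 e_H² |P_K|` edges, and as `P`
has a single edge inside `K`, each of the `Δ_H` copies through one of them accounts for one `e`.
-/

section EdgeDisjointFamilies

variable {ι β : Type*}

/-- `C` is a size-maximal pairwise edge-disjoint family of members of `{i | p i}`, as are `I_K`,
`T_K` and `P_K`. -/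
def IsMaxEdgeDisjoint (p : ι → Prop) (ed : ι → Finset β) (C : Finset ι) : Prop :=
  (∀ i ∈ C, p i) ∧ (C : Set ι).PairwiseDisjoint ed ∧
    ∀ J : Finset ι, (∀ i ∈ J, p i) → (J : Set ι).PairwiseDisjoint ed → J.card ≤ C.card

theorem IsMaxEdgeDisjoint.exists_inter_nonempty [DecidableEq ι] [DecidableEq β] {p : ι → Prop}
    {ed : ι → Finset β} {C : Finset ι} (hC : IsMaxEdgeDisjoint p ed C) {x : ι} (hx : p x)
    (hne : (ed x).Nonempty) : ∃ y ∈ C, (ed x ∩ ed y).Nonempty := by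
  by_contra! hdisj
  have hxC : x ∉ C := fun hxC =>
    hne.ne_empty (by rw [← Finset.inter_self (ed x)]; exact hdisj x hxC)
  have hle := hC.2.2 (insert x C)
    (by simpa [Finset.forall_mem_insert] using ⟨hx, hC.1⟩)
    (by
      rw [Finset.coe_insert]
      exact hC.2.1.insert fun y hy _ => Finset.disjoint_iff_inter_eq_empty.2 (hdisj y hy))
  rw [Finset.card_insert_of_notMem hxC] at hle
  omega

/-- `A` enlarged by the whole blocks `ed i`, `i ∈ C`, that it touches. -/
def thicken [DecidableEq β] (C : Finset ι) (ed : ι → Finset β) (A : Finset β) : Finset β :=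
  A.biUnion fun b => insert b ((C.filter fun i => b ∈ ed i).biUnion ed)

variable [DecidableEq β] {C : Finset ι} {ed : ι → Finset β} {A : Finset β}

theorem subset_thicken : A ⊆ thicken C ed A :=
  fun b hb => Finset.mem_biUnion.2 ⟨b, hb, Finset.mem_insert_self _ _⟩

theorem subset_thicken_of_mem {b : β} (hb : b ∈ A) {i : ι} (hi : i ∈ C) (hbi : b ∈ ed i) :
    ed i ⊆ thicken C ed A :=
  fun _ hx => Finset.mem_biUnion.2 ⟨b, hb, Finset.mem_insert_of_mem <|
    Finset.mem_biUnion.2 ⟨i, Finset.mem_filter.2 ⟨hi, hbi⟩, hx⟩⟩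

theorem card_thicken_le (hC : (C : Set ι).PairwiseDisjoint ed) {m : ℕ} (hm : 1 ≤ m)
    (hcard : ∀ i ∈ C, (ed i).card ≤ m) : (thicken C ed A).card ≤ A.card * m := by
  refine Finset.card_biUnion_le_card_mul _ _ _ fun b _ => ?_
  by_cases hb : ∃ i ∈ C, b ∈ ed i
  · obtain ⟨i, hi, hbi⟩ := hb
    -- by disjointness, `i` is the only block containing `b`
    have hblock : insert b ((C.filter fun j => b ∈ ed j).biUnion ed) ⊆ ed i := by
      refine Finset.insert_subset hbi fun x hx => ?_
      obtain ⟨j, hj, hxj⟩ := Finset.mem_biUnion.1 hx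
      obtain ⟨hjC, hbj⟩ := Finset.mem_filter.1 hj
      rwa [hC.elim_finset hjC hi b hbj hbi] at hxj
    exact (Finset.card_le_card hblock).trans (hcard i hi)
  · simp only [not_exists, not_and] at hb
    rw [Finset.filter_false_of_mem hb, Finset.biUnion_empty, Finset.insert_empty,
      Finset.card_singleton]
    exact hm

end EdgeDisjointFamilies

theorem Sym2.eq_of_forall_mem_of_card_eq_two {α : Type*} [DecidableEq α] {s : Finset α}
    (hs : s.card = 2) {e e' : Sym2 α} (he : ¬e.IsDiag) (he' : ¬e'.IsDiag)
    (hes : ∀ v ∈ e, v ∈ s) (hes' : ∀ v ∈ e', v ∈ s) : e = e' := by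
  have toFinset_eq : ∀ z : Sym2 α, ¬z.IsDiag → (∀ v ∈ z, v ∈ s) → z.toFinset = s :=
    fun z hz hzs => Finset.eq_of_subset_of_card_le (fun v hv => hzs v (Sym2.mem_toFinset.1 hv))
      (by rw [hs, Sym2.card_toFinset_of_not_isDiag z hz])
  ext v
  rw [← Sym2.mem_toFinset, ← Sym2.mem_toFinset (z := e'), toFinset_eq e he hes,
    toFinset_eq e' he' hes']

def edgesWithin {n : ℕ} (K : Finset (Fin n)) (s : Finset (Sym2 (Fin n))) :
    Finset (Sym2 (Fin n)) :=
  s.filter fun e => ∀ v ∈ e, v ∈ K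

def copiesMeeting {n : ℕ} (C : Finset (Finset (Fin n) × Finset (Sym2 (Fin n))))
    (A : Finset (Sym2 (Fin n))) : Finset (Finset (Fin n) × Finset (Sym2 (Fin n))) :=
  C.filter fun P => (P.2 ∩ A).Nonempty

/-- The pairs `(H₁, H₂)` whose unions make up `P_K`. -/
def IsOverlapPair {h n : ℕ} (H : SimpleGraph (Fin h)) (G : Finset (Sym2 (Fin n)))
    (K : Finset (Fin n))
    (q : (Finset (Fin n) × Finset (Sym2 (Fin n))) × (Finset (Fin n) × Finset (Sym2 (Fin n)))) :
    Prop :=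
  q.1 ∈ HstarK H G K ∧ q.2 ∈ HstarK H G K ∧ q.1 ≠ q.2 ∧
    (q.1.2 ∩ q.2.2).Nonempty ∧ q.1.1 ∩ K ≠ q.2.1 ∩ K

section Copies

variable {h n : ℕ} {H : SimpleGraph (Fin h)} {G : Finset (Sym2 (Fin n))} {K : Finset (Fin n)}
  {P Q : Finset (Fin n) × Finset (Sym2 (Fin n))} {f : Sym2 (Fin n)}

theorem mem_copies : P ∈ copies H G ↔ IsCopyPair H G P := by
  simp [copies]

theorem HstarK_subset_HKcol : HstarK H G K ⊆ HKcol H G K := Finset.filter_subset _ _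

theorem HKcol_subset_copies : HKcol H G K ⊆ copies H G := Finset.filter_subset _ _

theorem HstarK_subset_copies : HstarK H G K ⊆ copies H G :=
  HstarK_subset_HKcol.trans HKcol_subset_copies

namespace IsCopyPair

theorem card_edges (hP : IsCopyPair H G P) : P.2.card = H.edgeSet.ncard := by
  obtain ⟨φ, -, hedges, -⟩ := hP
  rw [← Set.ncard_coe_finset, hedges,
    Set.ncard_image_of_injective _ (Sym2.map.injective φ.injective)]

theorem exists_of_mem (hP : IsCopyPair H G P) (hf : f ∈ P.2) :
    ∃ φ : Fin h ↪ Fin n, P.1 = Finset.univ.image ⇑φ ∧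
      ∃ e ∈ H.edgeSet, Sym2.map φ e = f := by
  obtain ⟨φ, hverts, hedges, -⟩ := hP
  have hf' : f ∈ (P.2 : Set (Sym2 (Fin n))) := hf
  rw [hedges] at hf'
  exact ⟨φ, hverts, hf'⟩

theorem not_isDiag (hP : IsCopyPair H G P) (hf : f ∈ P.2) : ¬f.IsDiag := by
  obtain ⟨φ, -, e, he, rfl⟩ := hP.exists_of_mem hf
  rw [Sym2.isDiag_map φ.injective]
  exact SimpleGraph.not_isDiag_of_mem_edgeSet H he

theorem mem_verts (hP : IsCopyPair H G P) (hf : f ∈ P.2) {v : Fin n} (hv : v ∈ f) :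
    v ∈ P.1 := by
  obtain ⟨φ, hverts, e, -, rfl⟩ := hP.exists_of_mem hf
  obtain ⟨w, -, rfl⟩ := Sym2.mem_map.1 hv
  rw [hverts]
  exact Finset.mem_image_of_mem _ (Finset.mem_univ w)

theorem eq_of_mem_edgesWithin {G' : Finset (Sym2 (Fin n))} (hP : IsCopyPair H G P)
    (hQ : IsCopyPair H G' Q) (hcard : (P.1 ∩ K).card = 2) (htrace : P.1 ∩ K = Q.1 ∩ K)
    {e e' : Sym2 (Fin n)} (he : e ∈ edgesWithin K P.2) (he' : e' ∈ edgesWithin K Q.2) :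
    e = e' := by
  obtain ⟨heP, heK⟩ := Finset.mem_filter.1 he
  obtain ⟨he'Q, he'K⟩ := Finset.mem_filter.1 he'
  refine Sym2.eq_of_forall_mem_of_card_eq_two hcard (hP.not_isDiag heP) (hQ.not_isDiag he'Q)
    (fun v hv => Finset.mem_inter.2 ⟨hP.mem_verts heP hv, heK v hv⟩) fun v hv => ?_
  rw [htrace]
  exact Finset.mem_inter.2 ⟨hQ.mem_verts he'Q hv, he'K v hv⟩

end IsCopyPair

theorem card_edgesWithin_le_one (hP : P ∈ HstarK H G K) : (edgesWithin K P.2).card ≤ 1 := by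
  have hPc := mem_copies.1 (HstarK_subset_copies hP)
  exact Finset.card_le_one.2 fun e he e' he' =>
    hPc.eq_of_mem_edgesWithin hPc (Finset.mem_filter.1 hP).2 rfl he he'

theorem exists_mem_edgesWithin (hP : P ∈ HKcol H G K) : ∃ e, e ∈ edgesWithin K P.2 := by
  obtain ⟨e, heP, heK⟩ := (Finset.mem_filter.1 hP).2
  exact ⟨e, Finset.mem_filter.2 ⟨heP, heK⟩⟩

theorem card_filter_mem_copies_le_deltaH (H : SimpleGraph (Fin h)) (G : Finset (Sym2 (Fin n)))
    (f : Sym2 (Fin n)) : ((copies H G).filter fun P => f ∈ P.2).card ≤ deltaH H G := by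
  by_cases hf : f.IsDiag
  · -- copies have no diagonal edges, so none of them contains `f`
    rw [Finset.filter_false_of_mem fun P hP hfP => (mem_copies.1 hP).not_isDiag hfP hf]
    exact Nat.zero_le _
  · exact Finset.le_sup (f := fun f => ((copies H G).filter fun P => f ∈ P.2).card)
      (show f ∈ allEdges n by simpa [allEdges] using hf)

theorem card_copiesMeeting_le {C : Finset (Finset (Fin n) × Finset (Sym2 (Fin n)))}
    (hC : C ⊆ copies H G) (A : Finset (Sym2 (Fin n))) :
    (copiesMeeting C A).card ≤ A.card * deltaH H G := by
  have hsub : copiesMeeting C A ⊆ A.biUnion fun f => (copies H G).filter fun P => f ∈ P.2 := by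
    intro P hP
    obtain ⟨hPC, f, hf⟩ := Finset.mem_filter.1 hP
    obtain ⟨hfP, hfA⟩ := Finset.mem_inter.1 hf
    exact Finset.mem_biUnion.2 ⟨f, hfA, Finset.mem_filter.2 ⟨hC hPC, hfP⟩⟩
  exact (Finset.card_le_card hsub).trans
    (Finset.card_biUnion_le_card_mul _ _ _ fun f _ => card_filter_mem_copies_le_deltaH H G f)

theorem card_biUnion_edgesWithin_le {C : Finset (Finset (Fin n) × Finset (Sym2 (Fin n)))}
    (hC : C ⊆ copies H G) :
    (C.biUnion fun P => edgesWithin K P.2).card ≤ C.card * H.edgeSet.ncard :=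
  Finset.card_biUnion_le_card_mul _ _ _ fun _ hP =>
    (Finset.card_filter_le _ _).trans (mem_copies.1 (hC hP)).card_edges.le

theorem card_biUnion_edgesWithin_le_of_subset_HstarK
    {C : Finset (Finset (Fin n) × Finset (Sym2 (Fin n)))} (hC : C ⊆ HstarK H G K) :
    (C.biUnion fun P => edgesWithin K P.2).card ≤ C.card :=
  (Finset.card_biUnion_le_card_mul _ _ 1 fun _ hP => card_edgesWithin_le_one (hC hP)).trans_eq
    (mul_one _)

theorem card_biUnion_snd_le {C : Finset (Finset (Fin n) × Finset (Sym2 (Fin n)))}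
    (hC : C ⊆ copies H G) : (C.biUnion Prod.snd).card ≤ C.card * H.edgeSet.ncard :=
  Finset.card_biUnion_le_card_mul _ _ _ fun _ hP => (mem_copies.1 (hC hP)).card_edges.le

end Copies

section ClaimTwo

variable {h n : ℕ} {H : SimpleGraph (Fin h)} {G : Finset (Sym2 (Fin n))} {K : Finset (Fin n)}
  {IK TK : Finset (Finset (Fin n) × Finset (Sym2 (Fin n)))}
  {PK : Finset
    ((Finset (Fin n) × Finset (Sym2 (Fin n))) × (Finset (Fin n) × Finset (Sym2 (Fin n))))}

theorem card_biUnion_overlapPair_le (hPK : ∀ q ∈ PK, IsOverlapPair H G K q) :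
    (PK.biUnion fun q => q.1.2 ∪ q.2.2).card ≤ PK.card * (2 * H.edgeSet.ncard) := by
  refine Finset.card_biUnion_le_card_mul _ _ _ fun q hq => ?_
  obtain ⟨h₁, h₂, -⟩ := hPK q hq
  calc (q.1.2 ∪ q.2.2).card ≤ q.1.2.card + q.2.2.card := Finset.card_union_le _ _
    _ = 2 * H.edgeSet.ncard := by
      rw [(mem_copies.1 (HstarK_subset_copies h₁)).card_edges,
        (mem_copies.1 (HstarK_subset_copies h₂)).card_edges, two_mul]

theorem mem_edgesWithin_or_mem_copiesMeeting
    (hI : IsMaxEdgeDisjoint (· ∈ HstarK H G K) Prod.snd IK)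
    (hP : IsMaxEdgeDisjoint (IsOverlapPair H G K) (fun q => q.1.2 ∪ q.2.2) PK)
    {P : Finset (Fin n) × Finset (Sym2 (Fin n))} (hPs : P ∈ HstarK H G K) {e : Sym2 (Fin n)}
    (he : e ∈ edgesWithin K P.2) :
    e ∈ IK.biUnion (fun I => edgesWithin K I.2) ∨
      P ∈ copiesMeeting (HstarK H G K)
        (thicken IK Prod.snd (PK.biUnion fun q => q.1.2 ∪ q.2.2)) := by
  have heP : e ∈ P.2 := (Finset.mem_filter.1 he).1
  obtain ⟨I, hIK, f₀, hf₀⟩ := hI.exists_inter_nonempty hPs ⟨e, heP⟩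
  obtain ⟨hf₀P, hf₀I⟩ := Finset.mem_inter.1 hf₀
  have hIs : I ∈ HstarK H G K := hI.1 I hIK
  by_cases htrace : P.1 ∩ K = I.1 ∩ K
  · left
    obtain ⟨eI, heI⟩ := exists_mem_edgesWithin (HstarK_subset_HKcol hIs)
    have hPc := mem_copies.1 (HstarK_subset_copies hPs)
    rw [hPc.eq_of_mem_edgesWithin (mem_copies.1 (HstarK_subset_copies hIs))
      (Finset.mem_filter.1 hPs).2 htrace he heI]
    exact Finset.mem_biUnion.2 ⟨I, hIK, heI⟩
  · right
    have hPI : IsOverlapPair H G K (P, I) :=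
      ⟨hPs, hIs, fun hPI => htrace (by rw [show P = I from hPI]), ⟨f₀, hf₀⟩, htrace⟩
    obtain ⟨q, hq, f, hf⟩ := hP.exists_inter_nonempty hPI ⟨e, Finset.mem_union_left _ heP⟩
    obtain ⟨hfPI, hfq⟩ := Finset.mem_inter.1 hf
    have hfU : f ∈ PK.biUnion fun q => q.1.2 ∪ q.2.2 := Finset.mem_biUnion.2 ⟨q, hq, hfq⟩
    refine Finset.mem_filter.2 ⟨hPs, ?_⟩
    rcases Finset.mem_union.1 hfPI with hfP | hfI
    · exact ⟨f, Finset.mem_inter.2 ⟨hfP, subset_thicken hfU⟩⟩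
    · exact ⟨f₀, Finset.mem_inter.2 ⟨hf₀P, subset_thicken_of_mem hfU hIK hfI hf₀I⟩⟩

theorem YK_le_card_add_card_add_card
    (hI : IsMaxEdgeDisjoint (· ∈ HstarK H G K) Prod.snd IK)
    (hT : IsMaxEdgeDisjoint (· ∈ HKcol H G K \ HstarK H G K) Prod.snd TK)
    (hP : IsMaxEdgeDisjoint (IsOverlapPair H G K) (fun q => q.1.2 ∪ q.2.2) PK) :
    YK H G K ≤ (IK.biUnion fun I => edgesWithin K I.2).card +
      ((copiesMeeting (copies H G) (TK.biUnion Prod.snd)).biUnion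
        fun P => edgesWithin K P.2).card +
      ((copiesMeeting (HstarK H G K)
        (thicken IK Prod.snd (PK.biUnion fun q => q.1.2 ∪ q.2.2))).biUnion
          fun P => edgesWithin K P.2).card := by
  refine (Finset.card_le_card fun e he => ?_).trans
    ((Finset.card_union_le _ _).trans (Nat.add_le_add_right (Finset.card_union_le _ _) _))
  obtain ⟨-, heK, P, hPc, heP⟩ := Finset.mem_filter.1 he
  have heW : e ∈ edgesWithin K P.2 := Finset.mem_filter.2 ⟨heP, heK⟩
  have hPcol : P ∈ HKcol H G K := Finset.mem_filter.2 ⟨hPc, e, heP, heK⟩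
  by_cases hPs : P ∈ HstarK H G K
  · rcases mem_edgesWithin_or_mem_copiesMeeting hI hP hPs heW with hIK | hPW
    · exact Finset.mem_union_left _ (Finset.mem_union_left _ hIK)
    · exact Finset.mem_union_right _ (Finset.mem_biUnion.2 ⟨P, hPW, heW⟩)
  · obtain ⟨T, hT, f, hf⟩ :=
      hT.exists_inter_nonempty (Finset.mem_sdiff.2 ⟨hPcol, hPs⟩) ⟨e, heP⟩
    obtain ⟨hfP, hfT⟩ := Finset.mem_inter.1 hf
    have hPT : P ∈ copiesMeeting (copies H G) (TK.biUnion Prod.snd) :=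
      Finset.mem_filter.2
        ⟨hPc, f, Finset.mem_inter.2 ⟨hfP, Finset.mem_biUnion.2 ⟨T, hT, hfT⟩⟩⟩
    exact Finset.mem_union_left _
      (Finset.mem_union_right _ (Finset.mem_biUnion.2 ⟨P, hPT, heW⟩))

end ClaimTwo

theorem claim_two_general {h n : ℕ} (H : SimpleGraph (Fin h))
    (hHe : H.edgeSet.Nonempty)
    (G : Finset (Sym2 (Fin n)))
    (K : Finset (Fin n))
    (IK TK : Finset (Finset (Fin n) × Finset (Sym2 (Fin n))))
    (hIK₁ : IK ⊆ HstarK H G K)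
    (hIK₂ : ∀ P ∈ IK, ∀ Q ∈ IK, P ≠ Q → Disjoint P.2 Q.2)
    (hIK₃ : ∀ J ⊆ HstarK H G K,
      (∀ P ∈ J, ∀ Q ∈ J, P ≠ Q → Disjoint P.2 Q.2) → J.card ≤ IK.card)
    (hTK₁ : TK ⊆ HKcol H G K \ HstarK H G K)
    (hTK₂ : ∀ P ∈ TK, ∀ Q ∈ TK, P ≠ Q → Disjoint P.2 Q.2)
    (hTK₃ : ∀ J ⊆ HKcol H G K \ HstarK H G K,
      (∀ P ∈ J, ∀ Q ∈ J, P ≠ Q → Disjoint P.2 Q.2) → J.card ≤ TK.card)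
    (PK : Finset ((Finset (Fin n) × Finset (Sym2 (Fin n))) × (Finset (Fin n) × Finset (Sym2 (Fin n)))))
    (hPK₁ : ∀ q ∈ PK, q.1 ∈ HstarK H G K ∧ q.2 ∈ HstarK H G K ∧ q.1 ≠ q.2 ∧
      (q.1.2 ∩ q.2.2).Nonempty ∧ q.1.1 ∩ K ≠ q.2.1 ∩ K)
    (hPK₂ : ∀ q ∈ PK, ∀ q' ∈ PK, q ≠ q' →
      Disjoint (q.1.2 ∪ q.2.2) (q'.1.2 ∪ q'.2.2))
    (hPK₃ : ∀ Q : Finset ((Finset (Fin n) × Finset (Sym2 (Fin n))) × (Finset (Fin n) × Finset (Sym2 (Fin n)))),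
      (∀ q ∈ Q, q.1 ∈ HstarK H G K ∧ q.2 ∈ HstarK H G K ∧ q.1 ≠ q.2 ∧
        (q.1.2 ∩ q.2.2).Nonempty ∧ q.1.1 ∩ K ≠ q.2.1 ∩ K) →
      (∀ q ∈ Q, ∀ q' ∈ Q, q ≠ q' →
        Disjoint (q.1.2 ∪ q.2.2) (q'.1.2 ∪ q'.2.2)) → Q.card ≤ PK.card) :
    YK H G K ≤ IK.card + 2 * H.edgeSet.ncard ^ 2 * (TK.card + PK.card) * deltaH H G := by
  have hI : IsMaxEdgeDisjoint (· ∈ HstarK H G K) Prod.snd IK := ⟨hIK₁, hIK₂, hIK₃⟩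
  have hT : IsMaxEdgeDisjoint (· ∈ HKcol H G K \ HstarK H G K) Prod.snd TK := ⟨hTK₁, hTK₂, hTK₃⟩
  have hP : IsMaxEdgeDisjoint (IsOverlapPair H G K) (fun q => q.1.2 ∪ q.2.2) PK :=
    ⟨hPK₁, hPK₂, hPK₃⟩
  set eH := H.edgeSet.ncard
  set Δ := deltaH H G
  have heH : 1 ≤ eH := (Set.ncard_pos (Set.toFinite _)).2 hHe
  have hIKc : IK ⊆ copies H G := hIK₁.trans HstarK_subset_copies
  have hTKc : TK ⊆ copies H G := hTK₁.trans (Finset.sdiff_subset.trans HKcol_subset_copies)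
  calc YK H G K ≤ _ := YK_le_card_add_card_add_card hI hT hP
    _ ≤ IK.card + TK.card * eH * Δ * eH + PK.card * (2 * eH) * eH * Δ := by
      gcongr ?_ + ?_ + ?_
      · exact card_biUnion_edgesWithin_le_of_subset_HstarK hIK₁
      · refine (card_biUnion_edgesWithin_le (Finset.filter_subset _ _)).trans ?_
        gcongr
        exact (card_copiesMeeting_le subset_rfl _).trans (by gcongr; exact card_biUnion_snd_le hTKc)
      · refine (card_biUnion_edgesWithin_le_of_subset_HstarK (Finset.filter_subset _ _)).trans <|
          (card_copiesMeeting_le HstarK_subset_copies _).trans ?_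
        gcongr
        refine (card_thicken_le hI.2.1 heH fun _ hI =>
          (mem_copies.1 (hIKc hI)).card_edges.le).trans ?_
        gcongr
        exact card_biUnion_overlapPair_le hPK₁
    _ ≤ IK.card + 2 * eH ^ 2 * (TK.card + PK.card) * Δ := by
      nlinarith [Nat.zero_le (TK.card * eH ^ 2 * Δ)]

/-- Claim 2: the deterministic bound
`Y_K ≤ |I_K| + 2 e_H² (|T_K| + |P_K|) Δ_H`. -/
theorem claim_two {h n : ℕ} (H : SimpleGraph (Fin h))
    (hHe : H.edgeSet.Nonempty) (hiso : ∀ v : Fin h, ∃ w, H.Adj v w)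
    (G : Finset (Sym2 (Fin n))) (hG : ∀ e ∈ G, ¬ e.IsDiag)
    (k : ℕ) (K : Finset (Fin n)) (hK : K.card = k)
    (IK TK : Finset (Finset (Fin n) × Finset (Sym2 (Fin n))))
    (hIK₁ : IK ⊆ HstarK H G K)
    (hIK₂ : ∀ P ∈ IK, ∀ Q ∈ IK, P ≠ Q → Disjoint P.2 Q.2)
    (hIK₃ : ∀ J ⊆ HstarK H G K,
      (∀ P ∈ J, ∀ Q ∈ J, P ≠ Q → Disjoint P.2 Q.2) → J.card ≤ IK.card)
    (hTK₁ : TK ⊆ HKcol H G K \ HstarK H G K)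
    (hTK₂ : ∀ P ∈ TK, ∀ Q ∈ TK, P ≠ Q → Disjoint P.2 Q.2)
    (hTK₃ : ∀ J ⊆ HKcol H G K \ HstarK H G K,
      (∀ P ∈ J, ∀ Q ∈ J, P ≠ Q → Disjoint P.2 Q.2) → J.card ≤ TK.card)
    (PK : Finset ((Finset (Fin n) × Finset (Sym2 (Fin n))) × (Finset (Fin n) × Finset (Sym2 (Fin n)))))
    (hPK₁ : ∀ q ∈ PK, q.1 ∈ HstarK H G K ∧ q.2 ∈ HstarK H G K ∧ q.1 ≠ q.2 ∧
      (q.1.2 ∩ q.2.2).Nonempty ∧ q.1.1 ∩ K ≠ q.2.1 ∩ K)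
    (hPK₂ : ∀ q ∈ PK, ∀ q' ∈ PK, q ≠ q' →
      Disjoint (q.1.2 ∪ q.2.2) (q'.1.2 ∪ q'.2.2))
    (hPK₃ : ∀ Q : Finset ((Finset (Fin n) × Finset (Sym2 (Fin n))) × (Finset (Fin n) × Finset (Sym2 (Fin n)))),
      (∀ q ∈ Q, q.1 ∈ HstarK H G K ∧ q.2 ∈ HstarK H G K ∧ q.1 ≠ q.2 ∧
        (q.1.2 ∩ q.2.2).Nonempty ∧ q.1.1 ∩ K ≠ q.2.1 ∩ K) →
      (∀ q ∈ Q, ∀ q' ∈ Q, q ≠ q' →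
        Disjoint (q.1.2 ∪ q.2.2) (q'.1.2 ∪ q'.2.2)) → Q.card ≤ PK.card) :
    YK H G K ≤ IK.card + 2 * H.edgeSet.ncard ^ 2 * (TK.card + PK.card) * deltaH H G :=
  claim_two_general H hHe G K IK TK hIK₁ hIK₂ hIK₃ hTK₁ hTK₂ hTK₃ PK hPK₁ hPK₂ hPK₃
end
end

section
/- Let n ∈ ℕ, p ∈ [0,1], and let S be a collection of edge-subsets of the complete graph K_n. Define Z as the largest number of pairwise disjoint edge-sets from S all of whose edges are present in G_{n,p}, and set μ := Σ_{β ∈ S} p^{|β|}. Then for every x > μ one has Pr(Z ≥ x) ≤ (eμ/x)^x. -/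
open Finset Filter
open scoped Classical

noncomputable section

/-- The largest number of pairwise disjoint edge sets from `S` that are all present in `G`. -/
def maxDisjointPresent {n : ℕ} (S : Finset (Finset (Sym2 (Fin n))))
    (G : Finset (Sym2 (Fin n))) : ℕ :=
  (S.powerset.filter fun T =>
      (∀ β ∈ T, β ⊆ G) ∧ ∀ β ∈ T, ∀ γ ∈ T, β ≠ γ → Disjoint β γ).sup Finset.card

/-!
If `Z ≥ x` then some `k = ⌈x⌉` pairwise disjoint members of `S` are all present, and a
disjoint family is present with probability `∏ p ^ |β|`. The union bound therefore gives
`Pr(Z ≥ x) ≤ e_k`, the `k`-th elementary symmetric function of the weights `w β = p ^ |β|`.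
Since `t ^ k e_k` is part of the expansion of `∏ (1 + t w β) ≤ exp (t μ)`, taking
`t = x / μ` gives `e_k ≤ e ^ x (μ / x) ^ k ≤ (e μ / x) ^ x`, using `μ / x < 1` and `k ≥ x`.
-/

def randomSubsetProb {α : Type*} (U : Finset α) (p : ℝ) (A : Set (Finset α)) : ℝ :=
  ∑ G ∈ U.powerset, if G ∈ A then p ^ #G * (1 - p) ^ (#U - #G) else 0

lemma gnpProb_eq_randomSubsetProb (n : ℕ) (p : ℝ) (A : Set (Finset (Sym2 (Fin n)))) :
    gnpProb n p A = randomSubsetProb (allEdges n) p A :=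
  rfl

section RandomSubset

variable {α : Type*} (U : Finset α) {p : ℝ}

lemma randomSubsetProb_le_sum {ι : Type*} (hp0 : 0 ≤ p) (hp1 : p ≤ 1) {A : Set (Finset α)}
    (F : Finset ι) (B : ι → Set (Finset α)) (hA : A ⊆ ⋃ i ∈ F, B i) :
    randomSubsetProb U p A ≤ ∑ i ∈ F, randomSubsetProb U p (B i) := by
  unfold randomSubsetProb
  rw [Finset.sum_comm]
  refine sum_le_sum fun G _ => ?_
  have hw : 0 ≤ p ^ #G * (1 - p) ^ (#U - #G) := by
    have := sub_nonneg.2 hp1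
    positivity
  have hterm (i : ι) : 0 ≤ if G ∈ B i then p ^ #G * (1 - p) ^ (#U - #G) else 0 := by
    split_ifs <;> simp [hw]
  split_ifs with hGA
  · obtain ⟨i, hi, hGB⟩ := Set.mem_iUnion₂.1 (hA hGA)
    simpa [hGB] using single_le_sum (fun i _ => hterm i) hi
  · exact sum_nonneg fun i _ => hterm i

lemma randomSubsetProb_superset [DecidableEq α] {E : Finset α} (hE : E ⊆ U) (p : ℝ) :
    randomSubsetProb U p {G | E ⊆ G} = p ^ #E := by
  calc randomSubsetProb U p {G | E ⊆ G}
      = ∑ G ∈ U.powerset with E ⊆ G, p ^ #G * (1 - p) ^ (#U - #G) := by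
        rw [randomSubsetProb, sum_filter]
        congr!
    _ = ∑ H ∈ (U \ E).powerset, p ^ #E * (p ^ #H * (1 - p) ^ (#(U \ E) - #H)) := by
        refine sum_nbij' (· \ E) (· ∪ E) ?_ ?_ ?_ ?_ ?_
        · intro G hG
          rw [mem_filter, mem_powerset] at hG
          exact mem_powerset.2 (sdiff_subset_sdiff hG.1 le_rfl)
        · intro H hH
          rw [mem_powerset] at hH
          rw [mem_filter, mem_powerset]
          exact ⟨union_subset (hH.trans sdiff_subset) hE, subset_union_right⟩
        · intro G hG
          exact sdiff_union_of_subset (mem_filter.1 hG).2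
        · intro H hH
          rw [union_sdiff_right, sdiff_eq_self_of_disjoint (subset_sdiff.1 (mem_powerset.1 hH)).2]
        · intro G hG
          obtain ⟨hGU, hEG⟩ := mem_filter.1 hG
          have hcard := card_le_card (mem_powerset.1 hGU)
          have hcard' := card_le_card hEG
          rw [card_sdiff_of_subset hE, card_sdiff_of_subset hEG, ← mul_assoc, ← pow_add,
            show #E + (#G - #E) = #G by omega, show #U - #E - (#G - #E) = #U - #G by omega]
    _ = p ^ #E := by
        rw [← mul_sum, sum_pow_mul_eq_add_pow, add_sub_cancel, one_pow, mul_one]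

lemma randomSubsetProb_sup_subset [DecidableEq α] {T : Finset (Finset α)}
    (hT : (T : Set (Finset α)).PairwiseDisjoint id) (hTU : ∀ β ∈ T, β ⊆ U) (p : ℝ) :
    randomSubsetProb U p {G | T.sup id ⊆ G} = ∏ β ∈ T, p ^ #β := by
  rw [randomSubsetProb_superset U ((Finset.sup_le_iff (f := id)).2 hTU), sup_eq_biUnion,
    card_biUnion hT, prod_pow_eq_pow_sum]
  rfl

end RandomSubset

lemma exists_pairwiseDisjoint_of_le_maxDisjointPresent {n k : ℕ}
    {S : Finset (Finset (Sym2 (Fin n)))} {G : Finset (Sym2 (Fin n))}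
    (h : k ≤ maxDisjointPresent S G) :
    ∃ T ∈ S.powersetCard k, (T : Set (Finset (Sym2 (Fin n)))).PairwiseDisjoint id ∧
      T.sup id ⊆ G := by
  obtain ⟨T₀, hT₀, hsup⟩ := exists_mem_eq_sup
    (S.powerset.filter fun T => (∀ β ∈ T, β ⊆ G) ∧ ∀ β ∈ T, ∀ γ ∈ T, β ≠ γ → Disjoint β γ)
    ⟨∅, by simp⟩ card
  rw [maxDisjointPresent, hsup] at h
  obtain ⟨hT₀S, hT₀G, hT₀disj⟩ := mem_filter.1 hT₀
  obtain ⟨T, hTT₀, rfl⟩ := exists_subset_card_eq h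
  exact ⟨T, mem_powersetCard.2 ⟨hTT₀.trans (mem_powerset.1 hT₀S), rfl⟩,
    fun β hβ γ hγ => hT₀disj β (hTT₀ hβ) γ (hTT₀ hγ),
    Finset.sup_le_iff.2 fun β hβ => hT₀G β (hTT₀ hβ)⟩

lemma gnpProb_maxDisjointPresent_ge_le_esymm {n : ℕ} {p : ℝ} (hp0 : 0 ≤ p) (hp1 : p ≤ 1)
    {S : Finset (Finset (Sym2 (Fin n)))} (hS : ∀ β ∈ S, β ⊆ allEdges n) (k : ℕ) :
    gnpProb n p {G | k ≤ maxDisjointPresent S G} ≤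
      ∑ T ∈ S.powersetCard k, ∏ β ∈ T, p ^ #β := by
  set F := (S.powersetCard k).filter fun T : Finset (Finset (Sym2 (Fin n))) =>
    (T : Set (Finset (Sym2 (Fin n)))).PairwiseDisjoint id
  rw [gnpProb_eq_randomSubsetProb]
  calc randomSubsetProb (allEdges n) p {G | k ≤ maxDisjointPresent S G}
      ≤ ∑ T ∈ F, randomSubsetProb (allEdges n) p {G | T.sup id ⊆ G} := by
        refine randomSubsetProb_le_sum _ hp0 hp1 F _ fun G hG => ?_
        obtain ⟨T, hT, hdisj, hTG⟩ := exists_pairwiseDisjoint_of_le_maxDisjointPresent hG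
        exact Set.mem_iUnion₂.2 ⟨T, mem_filter.2 ⟨hT, hdisj⟩, hTG⟩
    _ = ∑ T ∈ F, ∏ β ∈ T, p ^ #β := by
        refine sum_congr rfl fun T hT => ?_
        obtain ⟨hTS, hdisj⟩ := mem_filter.1 hT
        exact randomSubsetProb_sup_subset _ hdisj
          (fun β hβ => hS β ((mem_powersetCard.1 hTS).1 hβ)) p
    _ ≤ ∑ T ∈ S.powersetCard k, ∏ β ∈ T, p ^ #β :=
        sum_le_sum_of_subset_of_nonneg (filter_subset _ _) fun T _ _ =>
          prod_nonneg fun β _ => pow_nonneg hp0 _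

section ElementarySymmetric

variable {ι : Type*} (s : Finset ι) {w : ι → ℝ}

lemma pow_mul_esymm_le_exp (hw : ∀ i, 0 ≤ w i) {t : ℝ} (ht : 0 ≤ t) (k : ℕ) :
    t ^ k * ∑ T ∈ s.powersetCard k, ∏ i ∈ T, w i ≤ Real.exp (t * ∑ i ∈ s, w i) :=
  calc t ^ k * ∑ T ∈ s.powersetCard k, ∏ i ∈ T, w i
      = ∑ T ∈ s.powersetCard k, ∏ i ∈ T, t * w i := by
        rw [mul_sum]
        refine sum_congr rfl fun T hT => ?_
        rw [prod_mul_distrib, prod_const, (mem_powersetCard.1 hT).2]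
    _ ≤ ∑ T ∈ s.powerset, ∏ i ∈ T, t * w i :=
        sum_le_sum_of_subset_of_nonneg (fun T hT => mem_powerset.2 (mem_powersetCard.1 hT).1)
          fun T _ _ => prod_nonneg fun i _ => mul_nonneg ht (hw i)
    _ = ∏ i ∈ s, (1 + t * w i) := (prod_one_add s).symm
    _ ≤ Real.exp (t * ∑ i ∈ s, w i) := by
        rw [mul_sum]
        exact Real.prod_one_add_le_exp_sum s fun i => mul_nonneg ht (hw i)

lemma esymm_le_exp_mul_div_rpow (hw : ∀ i, 0 ≤ w i) {x : ℝ} (hx : ∑ i ∈ s, w i < x) {k : ℕ}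
    (hk : x ≤ k) :
    ∑ T ∈ s.powersetCard k, ∏ i ∈ T, w i ≤ (Real.exp 1 * (∑ i ∈ s, w i) / x) ^ x := by
  set μ := ∑ i ∈ s, w i
  have hμ0 : 0 ≤ μ := sum_nonneg fun i _ => hw i
  have hx0 : 0 < x := hμ0.trans_lt hx
  rcases hμ0.eq_or_lt with hμ | hμ
  · have hw0 : ∀ i ∈ s, w i = 0 := (sum_eq_zero_iff_of_nonneg fun i _ => hw i).1 hμ.symm
    have hk0 : k ≠ 0 := by
      rintro rfl
      exact hx0.not_ge (by exact_mod_cast hk)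
    refine le_of_eq_of_le (sum_eq_zero fun T hT => ?_) (by positivity)
    obtain ⟨hTs, hTk⟩ := mem_powersetCard.1 hT
    obtain ⟨i, hi⟩ := card_ne_zero.1 (hTk ▸ hk0)
    exact prod_eq_zero hi (hw0 i (hTs hi))
  have key := pow_mul_esymm_le_exp s hw (div_pos hx0 hμ).le k
  rw [div_mul_cancel₀ x hμ.ne', ← le_div_iff₀' (by positivity), div_eq_mul_inv, ← inv_pow,
    inv_div] at key
  have hratio : μ / x ≤ 1 := (div_le_one hx0).2 hx.le
  calc ∑ T ∈ s.powersetCard k, ∏ i ∈ T, w i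
      ≤ Real.exp x * (μ / x) ^ (k : ℝ) := by rwa [Real.rpow_natCast]
    _ ≤ Real.exp x * (μ / x) ^ x :=
        mul_le_mul_of_nonneg_left (Real.rpow_le_rpow_of_exponent_ge (by positivity) hratio hk)
          (Real.exp_pos x).le
    _ = (Real.exp 1 * μ / x) ^ x := by
        rw [mul_div_assoc, Real.mul_rpow (Real.exp_pos 1).le (by positivity), Real.exp_one_rpow]

end ElementarySymmetric

/-- Erdős–Tetali type upper tail bound: if `Z` is the largest number of pairwise disjoint
edge-sets from `S` present in `G_{n,p}` and `μ = ∑_{β ∈ S} p^{|β|}`, then for every `x > μ`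
we have `Pr(Z ≥ x) ≤ (eμ/x)^x`. -/
theorem claim_upper_tail (n : ℕ) (p : ℝ) (hp0 : 0 ≤ p) (hp1 : p ≤ 1)
    (S : Finset (Finset (Sym2 (Fin n)))) (hS : ∀ β ∈ S, β ⊆ allEdges n)
    (μ : ℝ) (hμ : μ = ∑ β ∈ S, p ^ β.card)
    (x : ℝ) (hx : μ < x) :
    gnpProb n p {G | x ≤ (maxDisjointPresent S G : ℝ)} ≤
      (Real.exp 1 * μ / x) ^ x := by
  have hevent : {G | x ≤ (maxDisjointPresent S G : ℝ)} =
      {G | ⌈x⌉₊ ≤ maxDisjointPresent S G} := by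
    ext G
    simp only [Set.mem_ofPred_eq, Nat.ceil_le]
  subst hμ
  rw [hevent]
  exact (gnpProb_maxDisjointPresent_ge_le_esymm hp0 hp1 hS _).trans
    (esymm_le_exp_mul_div_rpow S (fun β => pow_nonneg hp0 _) hx (Nat.le_ceil x))
end
end

section
/- Let H be a strictly 2-balanced graph with m_2(H) > 1. For every δ > 0 there exists C_0 = C_0(δ,H) such that for every C ≥ C_0 there exists c_0 = c_0(C,δ,H) > 0 such that for every 0 < c ≤ c_0, setting n := ⌊c·(k/\log k)^{m_2(H)}⌋ and p := C(\log k)/k, the following holds for all sufficiently large k and every fixed k-element vertex set K: the probability that G_{n,p} contains at least (δ/2)·\binom{k}{2}·p pairwise edge-disjoint copies of H from H*_K is at most exp(−(δ/2)·\binom{k}{2}·p), which is at most n^{−k}. -/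
/-!
A family of `T` pairwise edge-disjoint copies of `H` spans `T·e_H` edges, so a union bound over
such families gives probability at most `C(N, T) p^{T e_H} ≤ (N p^{e_H})^T / T! ≤ e^{-T}` as
soon as `e² N p^{e_H} ≤ T`, where `N ≤ v_H² k² n^{v_H - 2}` counts the copies in `H*_K` inside
`K_n`. Strict 2-balancedness forces `m₂(H) = (e_H - 1)/(v_H - 2)`, so
`n^{v_H - 2} p^{e_H - 1} ≤ c C^{e_H - 1}` and `e² N p^{e_H}` is a `c`-multiple of `k² p`, below
`(δ/2) C(k,2) p` for small `c`. Finally `k log n ≤ m₂(H) k log k ≤ (δ/6) C k log k` gives the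
comparison with `n^{-k}`.
-/

open Finset Filter
open scoped Classical

noncomputable section

/-- The vertices covered by a finite set of edges. -/
def edgeSupport {V : Type*} [Fintype V] (S : Finset (Sym2 V)) : Finset V :=
  Finset.univ.filter fun v => ∃ e ∈ S, v ∈ e

/-- The 2-density value `(e_F - 1)/(v_F - 2)` of the subgraph `F` spanned by the edge set `S`
(with vertex set the support of `S`), which is `1/2` when `F = K₂`. -/
def m2value {V : Type*} [Fintype V] (S : Finset (Sym2 V)) : ℝ :=
  if 3 ≤ (edgeSupport S).card then
    ((S.card : ℝ) - 1) / ((edgeSupport S).card - 2)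
  else (1 : ℝ) / 2

/-- The maximum 2-density over all subgraphs spanned by nonempty finite subsets of the
edge set `T`. -/
def m2set {V : Type*} [Fintype V] (T : Set (Sym2 V)) : ℝ :=
  sSup {q | ∃ S : Finset (Sym2 V), S.Nonempty ∧ ↑S ⊆ T ∧ q = m2value S}

/-- `m₂(H)`: the maximum of `(e_F - 1)/(v_F - 2)` (resp. `1/2` for `F = K₂`) over all
subgraphs `F ⊆ H` with at least one edge. -/
def m2 {V : Type*} [Fintype V] (H : SimpleGraph V) : ℝ :=
  m2set H.edgeSet

/-- `H` is strictly 2-balanced: it has an edge and `m₂(F) < m₂(H)` for every proper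
subgraph `F ⊊ H` with at least one edge. -/
def StrictlyTwoBalanced {V : Type*} [Fintype V] (H : SimpleGraph V) : Prop :=
  H.edgeSet.Nonempty ∧
    ∀ F : H.Subgraph, F ≠ ⊤ → F.edgeSet.Nonempty → m2set F.edgeSet < m2 H

/-- The largest number of pairwise edge-disjoint copies in the collection `F`. -/
def maxEdgeDisjoint {n : ℕ} (F : Finset (Finset (Fin n) × Finset (Sym2 (Fin n)))) : ℕ :=
  (F.powerset.filter fun J =>
      ∀ P ∈ J, ∀ Q ∈ J, P ≠ Q → Disjoint P.2 Q.2).sup Finset.card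


section RandomGraph

variable {n : ℕ} {p : ℝ}

lemma gnpWeight_nonneg (hp0 : 0 ≤ p) (hp1 : p ≤ 1) (G : Finset (Sym2 (Fin n))) :
    0 ≤ p ^ G.card * (1 - p) ^ ((allEdges n).card - G.card) :=
  mul_nonneg (pow_nonneg hp0 _) (pow_nonneg (sub_nonneg.2 hp1) _)

lemma gnpProb_mono (hp0 : 0 ≤ p) (hp1 : p ≤ 1) {A B : Set (Finset (Sym2 (Fin n)))}
    (hAB : ∀ G ⊆ allEdges n, G ∈ A → G ∈ B) : gnpProb n p A ≤ gnpProb n p B := by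
  refine sum_le_sum fun G hG => ?_
  by_cases hA : G ∈ A
  · rw [if_pos hA, if_pos (hAB G (mem_powerset.1 hG) hA)]
  · rw [if_neg hA]
    split_ifs
    exacts [gnpWeight_nonneg hp0 hp1 G, le_rfl]

lemma gnpProb_biUnion_le (hp0 : 0 ≤ p) (hp1 : p ≤ 1) {ι : Type*} (J : Finset ι)
    (B : ι → Set (Finset (Sym2 (Fin n)))) :
    gnpProb n p (⋃ j ∈ J, B j) ≤ ∑ j ∈ J, gnpProb n p (B j) := by
  unfold gnpProb
  rw [sum_comm]
  refine sum_le_sum fun G _ => ?_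
  have hterm : ∀ j ∈ J, 0 ≤ if G ∈ B j then
      p ^ G.card * (1 - p) ^ ((allEdges n).card - G.card) else 0 := fun j _ => by
    split_ifs
    exacts [gnpWeight_nonneg hp0 hp1 G, le_rfl]
  split_ifs with hG
  · obtain ⟨j, hj, hGj⟩ := Set.mem_iUnion₂.1 hG
    simpa only [if_pos hGj] using single_le_sum hterm hj
  · exact sum_nonneg hterm

lemma gnpProb_superset {E : Finset (Sym2 (Fin n))} (hE : E ⊆ allEdges n) :
    gnpProb n p {G | E ⊆ G} = p ^ E.card := by
  have hsplit : gnpProb n p {G | E ⊆ G} = p ^ E.card * ∑ S ∈ (allEdges n \ E).powerset,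
      p ^ S.card * (1 - p) ^ ((allEdges n \ E).card - S.card) := by
    have hfilter : gnpProb n p {G | E ⊆ G} = ∑ G ∈ (allEdges n).powerset with E ⊆ G,
        p ^ G.card * (1 - p) ^ ((allEdges n).card - G.card) := by
      rw [gnpProb, sum_filter]
      congr!
    rw [hfilter, mul_sum]
    refine sum_bij' (fun G _ => G \ E) (fun S _ => S ∪ E) ?_ ?_ ?_ ?_ ?_
    · intro G hG
      simp only [mem_filter, mem_powerset] at hG ⊢
      exact sdiff_subset_sdiff hG.1 le_rfl
    · intro S hS
      simp only [mem_filter, mem_powerset] at hS ⊢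
      exact ⟨union_subset (hS.trans sdiff_subset) hE, subset_union_right⟩
    · intro G hG
      exact sdiff_union_of_subset (mem_filter.1 hG).2
    · intro S hS
      exact union_sdiff_cancel_right
        (disjoint_of_subset_left (mem_powerset.1 hS) sdiff_disjoint)
    · intro G hG
      simp only [mem_filter, mem_powerset] at hG
      have := card_le_card hG.1
      have := card_le_card hG.2
      rw [card_sdiff_of_subset hG.2, card_sdiff_of_subset hE, ← mul_assoc, ← pow_add,
        Nat.add_sub_cancel' (card_le_card hG.2)]
      congr 2
      omega
  rw [hsplit, sum_pow_mul_eq_add_pow, add_sub_cancel, one_pow, mul_one]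

lemma gnpProb_exists_pairwiseDisjoint_le (hp0 : 0 ≤ p) (hp1 : p ≤ 1) {ι : Type*} (F : Finset ι)
    (E : ι → Finset (Sym2 (Fin n))) {e : ℕ} (hE : ∀ i ∈ F, E i ⊆ allEdges n)
    (hcard : ∀ i ∈ F, (E i).card = e) (T : ℕ) :
    gnpProb n p {G | ∃ J ⊆ F, J.card = T ∧ (J : Set ι).PairwiseDisjoint E ∧ ∀ i ∈ J, E i ⊆ G}
      ≤ (F.card * p ^ e) ^ T / T.factorial := by
  set 𝒥 : Finset (Finset ι) := (F.powersetCard T).filter fun J => (J : Set ι).PairwiseDisjoint E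
  have hunion : ∀ J ∈ 𝒥, (J.biUnion E).card = T * e ∧ J.biUnion E ⊆ allEdges n := by
    intro J hJ
    obtain ⟨hJF, hJT⟩ := mem_powersetCard.1 (mem_filter.1 hJ).1
    refine ⟨?_, biUnion_subset.2 fun i hi => hE i (hJF hi)⟩
    rw [card_biUnion (mem_filter.1 hJ).2, sum_congr rfl fun i hi => hcard i (hJF hi), sum_const,
      hJT, smul_eq_mul]
  calc gnpProb n p {G | ∃ J ⊆ F, J.card = T ∧ (J : Set ι).PairwiseDisjoint E ∧ ∀ i ∈ J, E i ⊆ G}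
      ≤ gnpProb n p (⋃ J ∈ 𝒥, {G | J.biUnion E ⊆ G}) := by
        refine gnpProb_mono hp0 hp1 fun G _ ⟨J, hJF, hJT, hJdisj, hJG⟩ => ?_
        exact Set.mem_iUnion₂.2 ⟨J, mem_filter.2 ⟨mem_powersetCard.2 ⟨hJF, hJT⟩, hJdisj⟩,
          biUnion_subset.2 hJG⟩
    _ ≤ ∑ J ∈ 𝒥, gnpProb n p {G | J.biUnion E ⊆ G} := gnpProb_biUnion_le hp0 hp1 𝒥 _
    _ = 𝒥.card * p ^ (T * e) := by
        rw [sum_congr rfl fun J hJ => by rw [gnpProb_superset (hunion J hJ).2, (hunion J hJ).1],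
          sum_const, nsmul_eq_mul]
    _ ≤ F.card.choose T * p ^ (T * e) := by
        gcongr
        exact_mod_cast (card_filter_le _ _).trans (card_powersetCard T F).le
    _ ≤ F.card ^ T / T.factorial * p ^ (T * e) := by
        gcongr
        exact Nat.choose_le_pow_div T F.card
    _ = (F.card * p ^ e) ^ T / T.factorial := by
        rw [mul_pow, ← pow_mul, mul_comm e T]
        ring

end RandomGraph

section TwoDensity

variable {V : Type*} [Fintype V]

lemma finite_m2values (T : Finset (Sym2 V)) :
    Set.Finite {q | ∃ S : Finset (Sym2 V), S.Nonempty ∧ ↑S ⊆ (T : Set (Sym2 V)) ∧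
      q = m2value S} := by
  refine (T.powerset.image m2value).finite_toSet.subset ?_
  rintro q ⟨S, -, hST, rfl⟩
  exact mem_image_of_mem m2value (mem_powerset.2 (coe_subset.1 hST))

lemma m2value_le_m2set {S T : Finset (Sym2 V)} (hS : S.Nonempty) (hST : S ⊆ T) :
    m2value S ≤ m2set (T : Set (Sym2 V)) :=
  le_csSup (finite_m2values T).bddAbove ⟨S, hS, coe_subset.2 hST, rfl⟩

lemma exists_m2set_eq_m2value {T : Finset (Sym2 V)} (hT : T.Nonempty) :
    ∃ S ⊆ T, S.Nonempty ∧ m2set (T : Set (Sym2 V)) = m2value S := by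
  have hmax := Set.Nonempty.csSup_mem ?_ (finite_m2values T)
  · obtain ⟨S, hS, hST, hmax⟩ := hmax
    exact ⟨S, coe_subset.1 hST, hS, hmax⟩
  · exact ⟨m2value T, T, hT, subset_refl _, rfl⟩

end TwoDensity

namespace StrictlyTwoBalanced

open SimpleGraph

variable {V : Type*} [Fintype V] {H : SimpleGraph V}

lemma edgeFinset_nonempty (hH : StrictlyTwoBalanced H) : H.edgeFinset.Nonempty := by
  obtain ⟨e, he⟩ := hH.1
  exact ⟨e, mem_edgeFinset.2 he⟩

lemma m2_eq_m2value (hH : StrictlyTwoBalanced H) : m2 H = m2value H.edgeFinset := by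
  obtain ⟨S, hSH, hS, hmax⟩ := exists_m2set_eq_m2value hH.edgeFinset_nonempty
  rw [coe_edgeFinset] at hmax
  rcases eq_or_ne S H.edgeFinset with rfl | hne
  · exact hmax
  set F := (⊤ : H.Subgraph).deleteEdges (H.edgeSet \ S)
  have hF : F.edgeSet = S := by
    ext e
    induction e with
    | _ x y =>
      simp only [F, Subgraph.mem_edgeSet, Subgraph.deleteEdges_adj,
        Subgraph.top_adj, Set.mem_sdiff, not_and, not_not, mem_coe]
      exact ⟨fun h => h.2 h.1, fun h => ⟨mem_edgeFinset.1 (hSH h), fun _ => h⟩⟩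
  have hFtop : F ≠ ⊤ := fun htop => hne (coe_injective (by
    rw [← hF, htop, Subgraph.edgeSet_top, coe_edgeFinset]))
  have hlt := hH.2 F hFtop (by rw [hF]; exact_mod_cast hS)
  rw [hF, m2, hmax] at hlt
  exact absurd (m2value_le_m2set hS subset_rfl) hlt.not_ge

lemma edgeSupport_eq_univ (hH : StrictlyTwoBalanced H) : edgeSupport H.edgeFinset = univ := by
  refine eq_univ_iff_forall.2 fun v => ?_
  by_contra hv
  have hvH : ∀ e ∈ H.edgeSet, v ∉ e := fun e he hve =>
    hv (mem_filter.2 ⟨mem_univ v, e, mem_edgeFinset.2 he, hve⟩)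
  set F := (⊤ : H.Subgraph).deleteVerts {v}
  have hFtop : F ≠ ⊤ := fun htop => by
    have : v ∈ F.verts := by rw [htop]; trivial
    simp [F] at this
  have hF : F.edgeSet = H.edgeSet := by
    ext e
    induction e with
    | _ x y =>
      simp only [F, Subgraph.mem_edgeSet, Subgraph.deleteVerts_adj,
        Subgraph.verts_top, Subgraph.top_adj, Set.mem_singleton_iff]
      refine ⟨fun h => h.2.2.2.2, fun h => ⟨trivial, ?_, trivial, ?_, h⟩⟩ <;> rintro rfl
      exacts [hvH _ h (Sym2.mem_mk_left _ _), hvH _ h (Sym2.mem_mk_right _ _)]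
  have hlt := hH.2 F hFtop (hF ▸ hH.1)
  rw [hF] at hlt
  exact lt_irrefl _ hlt

lemma three_le_card_and_m2_mul (hH : StrictlyTwoBalanced H) (hm : 1 < m2 H) :
    3 ≤ Fintype.card V ∧
      m2 H * ((Fintype.card V - 2 : ℕ) : ℝ) = ((H.edgeFinset.card - 1 : ℕ) : ℝ) := by
  have hcard : (edgeSupport H.edgeFinset).card = Fintype.card V := by
    rw [hH.edgeSupport_eq_univ, card_univ]
  have h3 : 3 ≤ Fintype.card V := by
    by_contra h3
    rw [hH.m2_eq_m2value, m2value, hcard, if_neg h3] at hm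
    norm_num at hm
  have he : 1 ≤ H.edgeFinset.card := hH.edgeFinset_nonempty.card_pos
  refine ⟨h3, ?_⟩
  rw [hH.m2_eq_m2value, m2value, hcard, if_pos h3, Nat.cast_sub (by omega), Nat.cast_sub he]
  have : (3 : ℝ) ≤ Fintype.card V := by exact_mod_cast h3
  push_cast
  exact div_mul_cancel₀ _ (by linarith)

end StrictlyTwoBalanced

lemma card_piFinset_ite_mem {ι β : Type*} [Fintype ι] [DecidableEq ι] [Fintype β] (s : Finset ι)
    (K : Finset β) :
    (Fintype.piFinset fun x => if x ∈ s then K else univ).card =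
      K.card ^ s.card * Fintype.card β ^ (Fintype.card ι - s.card) := by
  rw [Fintype.card_piFinset, prod_apply_ite]
  simp [filter_not, card_sdiff]

section Copies

variable {h n : ℕ} {H : SimpleGraph (Fin h)} {G G' : Finset (Sym2 (Fin n))} {K : Finset (Fin n)}
  {P : Finset (Fin n) × Finset (Sym2 (Fin n))}

def copyOf (H : SimpleGraph (Fin h)) (f : Fin h → Fin n) :
    Finset (Fin n) × Finset (Sym2 (Fin n)) :=
  (univ.image f, H.edgeFinset.image (Sym2.map f))

lemma IsCopyPair.exists_eq_copyOf (hP : IsCopyPair H G P) :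
    ∃ φ : Fin h ↪ Fin n, P = copyOf H φ := by
  obtain ⟨φ, hV, hE, -⟩ := hP
  exact ⟨φ, Prod.ext hV (coe_injective (by rw [hE, copyOf, coe_image, SimpleGraph.coe_edgeFinset]))⟩

lemma IsCopyPair.edges_subset (hP : IsCopyPair H G P) : P.2 ⊆ G :=
  hP.choose_spec.2.2

lemma IsCopyPair.card_edges_s6 (hP : IsCopyPair H G P) : P.2.card = H.edgeFinset.card := by
  obtain ⟨φ, rfl⟩ := hP.exists_eq_copyOf
  exact card_image_of_injective _ (Sym2.map.injective φ.injective)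

lemma mem_HstarK : P ∈ HstarK H G K ↔
    (IsCopyPair H G P ∧ ∃ e ∈ P.2, ∀ v ∈ e, v ∈ K) ∧ (P.1 ∩ K).card = 2 := by
  simp [HstarK, HKcol, copies]

lemma HstarK_mono (hGG' : G ⊆ G') : HstarK H G K ⊆ HstarK H G' K := by
  intro P hP
  obtain ⟨⟨⟨φ, hV, hE, hG⟩, hK⟩, h2⟩ := mem_HstarK.1 hP
  exact mem_HstarK.2 ⟨⟨⟨φ, hV, hE, hG.trans hGG'⟩, hK⟩, h2⟩

lemma HstarK_subset_image_copyOf :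
    HstarK H G K ⊆ (univ.offDiag.biUnion fun ij : Fin h × Fin h =>
      Fintype.piFinset fun x => if x ∈ ({ij.1, ij.2} : Finset (Fin h)) then K else univ).image
        (copyOf H) := by
  intro P hP
  obtain ⟨⟨hcopy, -⟩, h2⟩ := mem_HstarK.1 hP
  obtain ⟨φ, rfl⟩ := hcopy.exists_eq_copyOf
  obtain ⟨u, v, huv, huvK⟩ := card_eq_two.1 h2
  have hu : u ∈ univ.image φ ∩ K := huvK ▸ mem_insert_self u {v}
  have hv : v ∈ univ.image φ ∩ K := huvK ▸ mem_insert_of_mem (mem_singleton_self v)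
  obtain ⟨i, -, rfl⟩ := mem_image.1 (mem_inter.1 hu).1
  obtain ⟨j, -, rfl⟩ := mem_image.1 (mem_inter.1 hv).1
  refine mem_image.2 ⟨φ, mem_biUnion.2 ⟨(i, j), ?_, Fintype.mem_piFinset.2 fun x => ?_⟩, rfl⟩
  · exact mem_offDiag.2 ⟨mem_univ i, mem_univ j, fun hij => huv (congrArg φ hij)⟩
  · split_ifs with hx
    · rcases mem_insert.1 hx with rfl | hx
      · exact (mem_inter.1 hu).2
      · exact (mem_singleton.1 hx) ▸ (mem_inter.1 hv).2
    · exact mem_univ _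

lemma card_HstarK_le : (HstarK H G K).card ≤ h ^ 2 * (K.card ^ 2 * n ^ (h - 2)) := by
  calc (HstarK H G K).card
      ≤ (univ.offDiag.biUnion fun ij : Fin h × Fin h =>
          Fintype.piFinset fun x => if x ∈ ({ij.1, ij.2} : Finset (Fin h)) then K else univ).card :=
        (card_le_card HstarK_subset_image_copyOf).trans card_image_le
    _ ≤ ∑ ij ∈ (univ : Finset (Fin h)).offDiag, K.card ^ 2 * n ^ (h - 2) := by
        refine card_biUnion_le.trans (sum_le_sum fun ij hij => ?_)
        rw [card_piFinset_ite_mem, card_pair (mem_offDiag.1 hij).2.2, Fintype.card_fin,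
          Fintype.card_fin]
    _ ≤ h ^ 2 * (K.card ^ 2 * n ^ (h - 2)) := by
        rw [sum_const, smul_eq_mul, offDiag_card, card_univ, Fintype.card_fin, ← sq]
        exact Nat.mul_le_mul_right _ (Nat.sub_le _ _)

end Copies

lemma pow_div_factorial_le_exp_neg {x : ℝ} {T : ℕ} (hx : 0 ≤ x) (hxT : Real.exp 2 * x ≤ T) :
    x ^ T / T.factorial ≤ Real.exp (-T) :=
  calc x ^ T / T.factorial = Real.exp (-2 * T) * ((Real.exp 2 * x) ^ T / T.factorial) := by
        rw [mul_pow, ← Real.exp_nat_mul, ← mul_div_assoc, ← mul_assoc, ← Real.exp_add,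
          show -2 * (T : ℝ) + T * 2 = 0 by ring, Real.exp_zero, one_mul]
    _ ≤ Real.exp (-2 * T) * ((T : ℝ) ^ T / T.factorial) := by gcongr
    _ ≤ Real.exp (-2 * T) * Real.exp T := by
        gcongr
        exact Real.pow_div_factorial_le_exp _ T.cast_nonneg T
    _ = Real.exp (-T) := by rw [← Real.exp_add]; ring_nf

lemma pow_mul_div_pow_le {x c L C m : ℝ} {a b : ℕ} (hx : 0 ≤ x) (hxL : x ≤ c * L ^ m)
    (hc0 : 0 ≤ c) (hc1 : c ≤ 1) (hL : 0 < L) (hC : 0 ≤ C) (ha : 1 ≤ a) (hab : m * a = b) :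
    x ^ a * (C / L) ^ b ≤ c * C ^ b :=
  calc x ^ a * (C / L) ^ b ≤ (c * L ^ m) ^ a * (C / L) ^ b := by gcongr
    _ = c ^ a * C ^ b := by
        rw [mul_pow, ← Real.rpow_mul_natCast hL.le, hab, Real.rpow_natCast, div_pow]
        field_simp
    _ ≤ c * C ^ b := by
        gcongr
        exact pow_le_of_le_one hc0 hc1 (by omega)

lemma one_le_log_of_three_le {k : ℕ} (hk : 3 ≤ k) : 1 ≤ Real.log k := by
  rw [Real.le_log_iff_exp_le (by positivity)]
  have : (3 : ℝ) ≤ k := by exact_mod_cast hk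
  linarith [Real.exp_one_lt_d9]

lemma mul_sq_le_mul_choose_two {k : ℕ} (hk : 3 ≤ k) {a : ℝ} (ha : 0 ≤ a) :
    a / 6 * k ^ 2 ≤ a / 2 * k.choose 2 := by
  rw [Nat.cast_choose_two]
  have : (3 : ℝ) ≤ k := by exact_mod_cast hk
  have hk3 : (0 : ℝ) ≤ k * (k - 3) := mul_nonneg (by positivity) (by linarith)
  nlinarith [mul_nonneg ha hk3]

lemma eventually_mul_log_div_le_one (C : ℝ) :
    ∀ᶠ k : ℕ in atTop, C * Real.log k / k ≤ 1 := by
  have hlim : Tendsto (fun k : ℕ => C * (Real.log k / k)) atTop (nhds (C * 0)) :=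
    (Real.isLittleO_log_id_atTop.tendsto_div_nhds_zero.comp
      tendsto_natCast_atTop_atTop).const_mul C
  rw [mul_zero] at hlim
  filter_upwards [hlim.eventually (ge_mem_nhds one_pos)] with k hk
  rwa [mul_div_assoc]

lemma exists_pairwiseDisjoint_of_le_maxEdgeDisjoint {n T : ℕ}
    {F : Finset (Finset (Fin n) × Finset (Sym2 (Fin n)))} (hT : T ≤ maxEdgeDisjoint F) :
    ∃ J ⊆ F, J.card = T ∧ (J : Set (Finset (Fin n) × Finset (Sym2 (Fin n)))).PairwiseDisjoint
      Prod.snd := by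
  obtain ⟨J₀, hJ₀, hmax⟩ := exists_mem_eq_sup
    (F.powerset.filter fun J => ∀ P ∈ J, ∀ Q ∈ J, P ≠ Q → Disjoint P.2 Q.2) ⟨∅, by simp⟩ card
  rw [maxEdgeDisjoint, hmax] at hT
  obtain ⟨hJ₀F, hJ₀disj⟩ := mem_filter.1 hJ₀
  obtain ⟨J, hJJ₀, rfl⟩ := exists_subset_card_eq hT
  exact ⟨J, hJJ₀.trans (mem_powerset.1 hJ₀F), rfl,
    fun P hP Q hQ => hJ₀disj P (hJJ₀ hP) Q (hJJ₀ hQ)⟩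

lemma gnpProb_le_maxEdgeDisjoint_HstarK_le_exp_neg {h n : ℕ} (H : SimpleGraph (Fin h))
    (K : Finset (Fin n)) {p t : ℝ} (hp0 : 0 ≤ p) (hp1 : p ≤ 1)
    (ht : Real.exp 2 * ((HstarK H (allEdges n) K).card * p ^ H.edgeFinset.card) ≤ t) :
    gnpProb n p {G | t ≤ maxEdgeDisjoint (HstarK H G K)} ≤ Real.exp (-t) := by
  set T := ⌈t⌉₊
  calc gnpProb n p {G | t ≤ maxEdgeDisjoint (HstarK H G K)}
      ≤ gnpProb n p {G | ∃ J ⊆ HstarK H (allEdges n) K, J.card = T ∧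
          (J : Set (Finset (Fin n) × Finset (Sym2 (Fin n)))).PairwiseDisjoint Prod.snd ∧
          ∀ P ∈ J, P.2 ⊆ G} := by
        refine gnpProb_mono hp0 hp1 fun G hG htG => ?_
        obtain ⟨J, hJ, hJT, hJdisj⟩ := exists_pairwiseDisjoint_of_le_maxEdgeDisjoint
          (Nat.ceil_le.2 (Set.mem_ofPred.1 htG))
        exact ⟨J, hJ.trans (HstarK_mono hG), hJT, hJdisj,
          fun P hP => (mem_HstarK.1 (hJ hP)).1.1.edges_subset⟩
    _ ≤ ((HstarK H (allEdges n) K).card * p ^ H.edgeFinset.card) ^ T / T.factorial :=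
        gnpProb_exists_pairwiseDisjoint_le hp0 hp1 _ _
          (fun P hP => (mem_HstarK.1 hP).1.1.edges_subset)
          (fun P hP => (mem_HstarK.1 hP).1.1.card_edges_s6) T
    _ ≤ Real.exp (-T) := pow_div_factorial_le_exp_neg (by positivity) (ht.trans (Nat.le_ceil t))
    _ ≤ Real.exp (-t) := Real.exp_le_exp.2 (neg_le_neg (Nat.le_ceil t))

lemma card_HstarK_mul_pow_le {h n : ℕ} {H : SimpleGraph (Fin h)} (hH : StrictlyTwoBalanced H)
    (hm : 1 < m2 H) (K : Finset (Fin n)) {c C L : ℝ} (hc0 : 0 ≤ c) (hc1 : c ≤ 1) (hC : 0 ≤ C)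
    (hL : 0 < L) (hn : (n : ℝ) ≤ c * L ^ m2 H) :
    (HstarK H (allEdges n) K).card * (C / L) ^ H.edgeFinset.card ≤
      h ^ 2 * C ^ (H.edgeFinset.card - 1) * c * (K.card ^ 2 * (C / L)) := by
  obtain ⟨h3, hmul⟩ := hH.three_le_card_and_m2_mul hm
  rw [Fintype.card_fin] at h3 hmul
  have hN : ((HstarK H (allEdges n) K).card : ℝ) ≤ h ^ 2 * (K.card ^ 2 * n ^ (h - 2)) := by
    exact_mod_cast card_HstarK_le
  have hpow : (C / L) ^ H.edgeFinset.card = (C / L) ^ (H.edgeFinset.card - 1) * (C / L) := by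
    rw [← pow_succ, Nat.sub_add_cancel hH.edgeFinset_nonempty.card_pos]
  have hscale := pow_mul_div_pow_le (Nat.cast_nonneg n) hn hc0 hc1 hL hC (by omega) hmul
  calc (HstarK H (allEdges n) K).card * (C / L) ^ H.edgeFinset.card
      ≤ h ^ 2 * (K.card ^ 2 * n ^ (h - 2)) * ((C / L) ^ (H.edgeFinset.card - 1) * (C / L)) := by
        rw [hpow]
        gcongr
    _ = h ^ 2 * (K.card ^ 2 * (C / L)) * (n ^ (h - 2) * (C / L) ^ (H.edgeFinset.card - 1)) := by
        ring
    _ ≤ h ^ 2 * (K.card ^ 2 * (C / L)) * (c * C ^ (H.edgeFinset.card - 1)) := by gcongr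
    _ = h ^ 2 * C ^ (H.edgeFinset.card - 1) * c * (K.card ^ 2 * (C / L)) := by ring

lemma gnpProb_upper_tail_HstarK_le {h n k : ℕ} {H : SimpleGraph (Fin h)}
    (hH : StrictlyTwoBalanced H) (hm : 1 < m2 H) {δ C c : ℝ} (hC : 0 ≤ C) (hc0 : 0 ≤ c)
    (hc1 : c ≤ 1) (hcδ : 6 * Real.exp 2 * h ^ 2 * C ^ (H.edgeFinset.card - 1) * c ≤ δ)
    (hk : 3 ≤ k) (hp : C * Real.log k / k ≤ 1) (hn : (n : ℝ) ≤ c * ((k : ℝ) / Real.log k) ^ m2 H)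
    (K : Finset (Fin n)) (hK : K.card = k) :
    gnpProb n (C * Real.log k / k)
        {G | δ / 2 * (k.choose 2 : ℝ) * (C * Real.log k / k) ≤ maxEdgeDisjoint (HstarK H G K)}
      ≤ Real.exp (-(δ / 2 * (k.choose 2 : ℝ) * (C * Real.log k / k))) := by
  have hlogk := one_le_log_of_three_le hk
  have hL : (0 : ℝ) < k / Real.log k := by positivity
  have hpL : C * Real.log k / k = C / (k / Real.log k) := (div_div_eq_mul_div _ _ _).symm
  have hp0 : 0 ≤ C * Real.log k / k := by positivity
  refine gnpProb_le_maxEdgeDisjoint_HstarK_le_exp_neg H K hp0 hp ?_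
  have hcount := card_HstarK_mul_pow_le hH hm K hc0 hc1 hC hL hn
  rw [← hpL, hK] at hcount
  have hδ : 0 ≤ δ := le_trans (by positivity) hcδ
  set p := C * Real.log k / k
  set e := H.edgeFinset.card
  calc Real.exp 2 * ((HstarK H (allEdges n) K).card * p ^ e)
      ≤ Real.exp 2 * (h ^ 2 * C ^ (e - 1) * c * (k ^ 2 * p)) := by gcongr
    _ = 6 * Real.exp 2 * h ^ 2 * C ^ (e - 1) * c / 6 * k ^ 2 * p := by ring
    _ ≤ δ / 6 * k ^ 2 * p := by gcongr
    _ ≤ δ / 2 * (k.choose 2 : ℝ) * p :=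
        mul_le_mul_of_nonneg_right (mul_sq_le_mul_choose_two hk hδ) hp0

lemma exp_neg_le_rpow_neg {n k : ℕ} {m δ C c : ℝ} (hm : 0 ≤ m) (hCm : 6 * m ≤ δ * C)
    (hc1 : c ≤ 1) (hk : 3 ≤ k) (hkn : k ≤ n) (hn : (n : ℝ) ≤ c * ((k : ℝ) / Real.log k) ^ m) :
    Real.exp (-(δ / 2 * (k.choose 2 : ℝ) * (C * Real.log k / k))) ≤ (n : ℝ) ^ (-(k : ℝ)) := by
  have hlogk := one_le_log_of_three_le hk
  have hk0 : (0 : ℝ) < k := by positivity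
  have hn0 : (0 : ℝ) < n := by exact_mod_cast (show 0 < n by omega)
  have hnk : (n : ℝ) ≤ (k : ℝ) ^ m :=
    hn.trans ((mul_le_of_le_one_left (by positivity) hc1).trans
      (Real.rpow_le_rpow (by positivity) (div_le_self hk0.le hlogk) hm))
  have hlogn : Real.log n ≤ m * Real.log k := by
    rw [← Real.log_rpow hk0]
    exact Real.log_le_log hn0 hnk
  rw [Real.rpow_def_of_pos hn0, Real.exp_le_exp]
  have hδC : 0 ≤ δ * C * Real.log k / k := by
    have : 0 ≤ δ * C := by linarith
    positivity
  have hkm : (k : ℝ) * Real.log n ≤ δ / 2 * (k.choose 2 : ℝ) * (C * Real.log k / k) :=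
    calc (k : ℝ) * Real.log n ≤ k * (δ * C / 6 * Real.log k) := by
          gcongr
          exact hlogn.trans (by gcongr; linarith)
      _ = δ * C * Real.log k / k / 6 * k ^ 2 := by field_simp
      _ ≤ δ * C * Real.log k / k / 2 * k.choose 2 := mul_sq_le_mul_choose_two hk hδC
      _ = δ / 2 * (k.choose 2 : ℝ) * (C * Real.log k / k) := by ring
  linarith

/-- Upper tail bound for `|I_K|`: the probability that `G_{n,p}` contains at least
`(δ/2) C(k,2) p` pairwise edge-disjoint copies of `H` from `H*_K` is at most
`exp(-(δ/2) C(k,2) p) ≤ n^{-k}`. -/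
theorem IK_upper_tail {h : ℕ} (H : SimpleGraph (Fin h)) (hH : StrictlyTwoBalanced H)
    (hm : 1 < m2 H) (δ : ℝ) (hδ : 0 < δ) :
    ∃ C₀ : ℝ, ∀ C : ℝ, C₀ ≤ C → ∃ c₀ : ℝ, 0 < c₀ ∧ ∀ c : ℝ, 0 < c → c ≤ c₀ →
      ∀ᶠ k : ℕ in atTop, ∀ K : Finset (Fin ⌊c * ((k : ℝ) / Real.log k) ^ m2 H⌋₊), K.card = k →
        gnpProb ⌊c * ((k : ℝ) / Real.log k) ^ m2 H⌋₊ (C * Real.log k / k)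
            {G | δ / 2 * (k.choose 2 : ℝ) * (C * Real.log k / k) ≤ (maxEdgeDisjoint (HstarK H G K) : ℝ)}
          ≤ Real.exp (-(δ / 2 * (k.choose 2 : ℝ) * (C * Real.log k / k))) ∧
        Real.exp (-(δ / 2 * (k.choose 2 : ℝ) * (C * Real.log k / k))) ≤ (⌊c * ((k : ℝ) / Real.log k) ^ m2 H⌋₊ : ℝ) ^ (-(k : ℝ)) := by
  refine ⟨max 1 (6 * m2 H / δ), fun C hC => ?_⟩
  have hC1 : 1 ≤ C := (le_max_left _ _).trans hC
  have hCm : 6 * m2 H ≤ δ * C := by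
    have := (le_max_right _ _).trans hC
    rw [div_le_iff₀ hδ] at this
    linarith
  have hh : (0 : ℝ) < h := by
    have h3 := (hH.three_le_card_and_m2_mul hm).1
    rw [Fintype.card_fin] at h3
    exact_mod_cast (show 0 < h by omega)
  set D := 6 * Real.exp 2 * h ^ 2 * C ^ (H.edgeFinset.card - 1)
  have hD : 0 < D := by positivity
  refine ⟨min 1 (δ / D), by positivity, fun c hc hcc => ?_⟩
  have hcδ : D * c ≤ δ := by
    rw [mul_comm, ← le_div_iff₀ hD]
    exact hcc.trans (min_le_right _ _)
  filter_upwards [eventually_ge_atTop 3, eventually_mul_log_div_le_one C] with k hk hp K hK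
  have hn := Nat.floor_le (by positivity : 0 ≤ c * ((k : ℝ) / Real.log k) ^ m2 H)
  have hkn := hK ▸ (card_le_univ K).trans (Fintype.card_fin _).le
  have hc1 := hcc.trans (min_le_left _ _)
  exact ⟨gnpProb_upper_tail_HstarK_le hH hm (by linarith) hc.le hc1 hcδ hk hp hn K hK,
    exp_neg_le_rpow_neg (by linarith) hCm hc1 hk hkn hn⟩
end
end
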